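/- arXiv:2002.01024 — 5 statements merged into one kernel-verified Lean document; each statement's English description precedes it below -/
import Mathlib

section
/- Let t be a nonzero rational number and let a, b, c be positive rational numbers with a² + b² = c² and ab/2 = t. Then c − a ≠ 0, and setting X = t·b/(c − a) and Y = 2t²/(c − a), the point (X, Y) satisfies Y² = X³ − t²·X and Y ≠ 0. -/
/-! Clearing the denominator `(c − a)³` and substituting `ab = 2t` turns the curve equation
into the factorisation `b² = (c − a)(c + a)` of the Pythagorean relation. -/

lemma lt_of_sq_add_sq_eq {K : Type*} [Field K] [LinearOrder K] [IsStrictOrderedRing K]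
    {a b c : K} (hb : b ≠ 0) (hc : 0 < c) (h : a ^ 2 + b ^ 2 = c ^ 2) : a < c := by
  have hac : a ^ 2 < c ^ 2 := by rw [← h]; exact lt_add_of_pos_right _ (by positivity)
  exact (le_abs_self a).trans_lt (abs_lt_of_sq_lt_sq hac hc.le)

lemma triangle_point_sq_eq {K : Type*} [Field K] {t a b c : K} (hca : c - a ≠ 0)
    (hpyth : a ^ 2 + b ^ 2 = c ^ 2) (harea : a * b = 2 * t) :
    (2 * t ^ 2 / (c - a)) ^ 2 = (t * b / (c - a)) ^ 3 - t ^ 2 * (t * b / (c - a)) := by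
  field_simp
  linear_combination (-t ^ 3 * b) * hpyth - (2 * t ^ 3 * (c - a)) * harea

theorem triangle_to_point_general (t a b c : ℚ) (ht : t ≠ 0) (hc : 0 < c)
    (hpyth : a ^ 2 + b ^ 2 = c ^ 2) (harea : a * b / 2 = t) :
    c - a ≠ 0 ∧
      (2 * t ^ 2 / (c - a)) ^ 2 =
          (t * b / (c - a)) ^ 3 - t ^ 2 * (t * b / (c - a)) ∧
      2 * t ^ 2 / (c - a) ≠ 0 := by
  have hb : b ≠ 0 := by rintro rfl; simp [← harea] at ht
  have hca : c - a ≠ 0 := (sub_pos.2 (lt_of_sq_add_sq_eq hb hc hpyth)).ne'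
  have harea' : a * b = 2 * t := by rw [← harea]; ring
  exact ⟨hca, triangle_point_sq_eq hca hpyth harea',
    div_ne_zero (mul_ne_zero two_ne_zero (pow_ne_zero 2 ht)) hca⟩

/-- A rational right triangle `(a, b, c)` with area `t` gives rise to a rational point
`(X, Y) = (t·b/(c − a), 2t²/(c − a))` on the congruent number curve `Y² = X³ − t²X`
with `Y ≠ 0`. -/
theorem triangle_to_point (t a b c : ℚ) (ht : t ≠ 0) (ha : 0 < a) (hb : 0 < b) (hc : 0 < c)
    (hpyth : a ^ 2 + b ^ 2 = c ^ 2) (harea : a * b / 2 = t) :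
    c - a ≠ 0 ∧
      (2 * t ^ 2 / (c - a)) ^ 2 =
          (t * b / (c - a)) ^ 3 - t ^ 2 * (t * b / (c - a)) ∧
      2 * t ^ 2 / (c - a) ≠ 0 :=
  triangle_to_point_general t a b c ht hc hpyth harea
end

section
/- Let t be a squarefree positive integer. Then t is a congruent number if and only if there exist rational numbers X, Y with Y ≠ 0 and Y² = X³ − t²·X. -/
/-- A positive rational number `t` is a congruent number if it is the area of a right
triangle with rational side lengths. -/
def IsCongruent (t : ℚ) : Prop :=
  ∃ a b c : ℚ, 0 < a ∧ 0 < b ∧ 0 < c ∧ a ^ 2 + b ^ 2 = c ^ 2 ∧ a * b / 2 = t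

/-!
A rational right triangle `(a, b, c)` of area `t` gives the point
`X = t (a + c) / b`, `Y = 2 t² (a + c) / b²` of `Y² = X³ − t²X`, with `Y > 0`.
Conversely a point with `Y ≠ 0` gives the sides `(X² − t²) / Y`, `2tX / Y`, `(X² + t²) / Y`,
which satisfy Pythagoras and have product `2t`; their absolute values form a triangle of area `t`.
-/

theorem isCongruent_of_signed_sides {a b c t : ℚ} (ht : 0 < t) (hc : c ≠ 0)
    (hpyth : a ^ 2 + b ^ 2 = c ^ 2) (harea : a * b / 2 = t) : IsCongruent t := by
  have hab : 0 < a * b := by linarith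
  refine ⟨|a|, |b|, |c|, abs_pos.mpr (left_ne_zero_of_mul hab.ne'),
    abs_pos.mpr (right_ne_zero_of_mul hab.ne'), abs_pos.mpr hc, ?_, ?_⟩
  · simpa only [sq_abs] using hpyth
  · rw [← abs_mul, ← harea, abs_of_pos hab]

theorem exists_point_of_isCongruent {t : ℚ} (h : IsCongruent t) :
    ∃ X Y : ℚ, Y ≠ 0 ∧ Y ^ 2 = X ^ 3 - t ^ 2 * X := by
  obtain ⟨a, b, c, ha, hb, hc, hpyth, rfl⟩ := h
  refine ⟨a * b / 2 * (a + c) / b, 2 * (a * b / 2) ^ 2 * (a + c) / b ^ 2, by positivity, ?_⟩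
  field_simp
  linear_combination hpyth

theorem isCongruent_of_point {t X Y : ℚ} (ht : 0 < t) (hY : Y ≠ 0)
    (hcurve : Y ^ 2 = X ^ 3 - t ^ 2 * X) : IsCongruent t := by
  refine isCongruent_of_signed_sides (a := (X ^ 2 - t ^ 2) / Y) (b := 2 * t * X / Y)
    (c := (X ^ 2 + t ^ 2) / Y) ht (div_ne_zero (by positivity) hY) ?_ ?_
  · field_simp
    ring
  · field_simp
    linear_combination -hcurve

theorem isCongruent_iff_point_general (t : ℕ) (ht : 0 < t) :
    IsCongruent t ↔ ∃ X Y : ℚ, Y ≠ 0 ∧ Y ^ 2 = X ^ 3 - (t : ℚ) ^ 2 * X :=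
  ⟨exists_point_of_isCongruent, fun ⟨_, _, hY, hcurve⟩ =>
    isCongruent_of_point (by exact_mod_cast ht) hY hcurve⟩

/-- A squarefree positive integer `t` is a congruent number if and only if the curve
`Y² = X³ − t²X` has a rational point with `Y ≠ 0`. -/
theorem isCongruent_iff_point (t : ℕ) (hsf : Squarefree t) (ht : 0 < t) :
    IsCongruent t ↔ ∃ X Y : ℚ, Y ≠ 0 ∧ Y ^ 2 = X ^ 3 - (t : ℚ) ^ 2 * X :=
  isCongruent_iff_point_general t ht
end

section
/- Let t be a squarefree positive integer. Then t is a congruent number if and only if the group of rational points E_t(ℚ) of the elliptic curve E_t : Y² = X³ − t²X is infinite. -/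
/-- The congruent number elliptic curve `Eₜ : Y² = X³ − t²X` in affine Weierstrass form. -/
def Et (t : ℚ) : WeierstrassCurve.Affine ℚ :=
  { a₁ := 0, a₂ := 0, a₃ := 0, a₄ := -t ^ 2, a₆ := 0 }

/-!
A right triangle with legs `a, b`, hypotenuse `c` and area `t` gives the three rational squares
`((a - b)/2)², (c/2)², ((a + b)/2)²` in arithmetic progression with difference `t`; conversely
a point `(x, y)` of `Eₜ` with `y ≠ 0` gives the triangle `|(x² - t²)/y|, |2tx/y|, (x² + t²)/|y|`.
Only the three points `(0, 0), (±t, 0)` have `y = 0`.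

For infinitude, apply the duplication map `x ↦ (x² + t²)² / (4(x³ - t²x))` repeatedly to the
middle term `x = (a/e)²` of such a progression, with `x ∓ t = (b/e)², (c/e)²`. When `t` is
squarefree, `a⁴ + t²e⁴` is prime to `2abce`, so the image of `x` has denominator exactly
`(2abce)² > e²`, and the orbit of `x` is infinite.
-/

open WeierstrassCurve.Affine

lemma Et_nonsingular_iff {t : ℚ} (ht : t ≠ 0) {x y : ℚ} :
    (Et t).Nonsingular x y ↔ y ^ 2 = x ^ 3 - t ^ 2 * x := by
  rw [← equation_iff_nonsingular_of_Δ_ne_zero, equation_iff]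
  · simp only [Et]
    constructor <;> intro h <;> linear_combination h
  · simp [Et, WeierstrassCurve.Δ, WeierstrassCurve.b₂, WeierstrassCurve.b₄,
      WeierstrassCurve.b₆, WeierstrassCurve.b₈, ht]

lemma infinite_option_iff {α : Type*} : Infinite (Option α) ↔ Infinite α :=
  ⟨fun h => not_finite_iff_infinite.mp fun _ => not_finite_iff_infinite.mpr h inferInstance,
    fun _ => inferInstance⟩

lemma infinite_point_iff {t : ℚ} (ht : t ≠ 0) :
    Infinite (Et t).Point ↔ {p : ℚ × ℚ | p.2 ^ 2 = p.1 ^ 3 - t ^ 2 * p.1}.Infinite := by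
  let e : (Et t).Point ≃ Option {p : ℚ × ℚ | p.2 ^ 2 = p.1 ^ 3 - t ^ 2 * p.1} :=
    (nonsingularPointEquiv _).trans
      (Equiv.subtypeEquivRight fun p => Et_nonsingular_iff ht).optionCongr
  rw [e.infinite_iff, infinite_option_iff, Set.infinite_coe_iff]

lemma exists_sq_eq_of_infinite {t : ℚ}
    (h : {p : ℚ × ℚ | p.2 ^ 2 = p.1 ^ 3 - t ^ 2 * p.1}.Infinite) :
    ∃ x y : ℚ, y ≠ 0 ∧ y ^ 2 = x ^ 3 - t ^ 2 * x := by
  obtain ⟨⟨x, y⟩, hxy : y ^ 2 = x ^ 3 - t ^ 2 * x, h2⟩ :=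
    (h.sdiff ({(0, 0), (t, 0), (-t, 0)} : Set (ℚ × ℚ)).toFinite).nonempty
  refine ⟨x, y, fun hy => h2 ?_, hxy⟩
  subst hy
  have : x * (x - t) * (x + t) = 0 := by linear_combination -hxy
  simp only [mul_eq_zero, sub_eq_zero, add_eq_zero_iff_eq_neg] at this
  simp only [Set.mem_insert_iff, Set.mem_singleton_iff, Prod.mk.injEq, and_true]
  tauto

lemma isCongruent_of_sq_eq {t x y : ℚ} (ht : 0 < t) (hy : y ≠ 0)
    (h : y ^ 2 = x ^ 3 - t ^ 2 * x) : IsCongruent t := by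
  have hx : x ≠ 0 := by rintro rfl; simp_all
  have hxt : x ^ 2 - t ^ 2 ≠ 0 := by
    intro h0
    apply hy
    rw [← pow_eq_zero_iff two_ne_zero]
    linear_combination h + x * h0
  refine ⟨|(x ^ 2 - t ^ 2) / y|, |2 * t * x / y|, (x ^ 2 + t ^ 2) / |y|, by positivity,
    by positivity, by positivity, ?_, ?_⟩
  · rw [sq_abs, sq_abs, div_pow, div_pow, div_pow, sq_abs]
    ring
  · rw [← abs_mul, show (x ^ 2 - t ^ 2) / y * (2 * t * x / y) = 2 * t by
      field_simp; linear_combination -h, abs_of_pos (by positivity)]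
    ring

lemma Rat.sq_ne_two (q : ℚ) : q ^ 2 ≠ 2 := by
  have : ¬ IsSquare (2 : ℚ) := by
    exact_mod_cast irrational_sqrt_natCast_iff.mp (by exact_mod_cast irrational_sqrt_two)
  exact fun h => this ⟨q, by rw [← h, sq]⟩

def SquareAP (t x : ℚ) : Prop :=
  ∃ u v w : ℚ, u ≠ 0 ∧ v ≠ 0 ∧ w ≠ 0 ∧ x = u ^ 2 ∧ x - t = v ^ 2 ∧ x + t = w ^ 2

/-- The `x`-coordinate of `2P` for a point `P = (x, y)` of `Eₜ`. -/
def doubleX (t x : ℚ) : ℚ := (x ^ 2 + t ^ 2) ^ 2 / (4 * (x ^ 3 - t ^ 2 * x))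

lemma IsCongruent.exists_squareAP {t : ℚ} (h : IsCongruent t) : ∃ x, SquareAP t x := by
  obtain ⟨a, b, c, ha, hb, hc, hpyth, rfl⟩ := h
  have hab : a ≠ b := by
    rintro rfl
    exact Rat.sq_ne_two (c / a) (by field_simp; linear_combination -hpyth)
  refine ⟨(c / 2) ^ 2, c / 2, (a - b) / 2, (a + b) / 2, by positivity,
    div_ne_zero (sub_ne_zero.mpr hab) two_ne_zero, by positivity, rfl, ?_, ?_⟩
  · linear_combination -hpyth / 4
  · linear_combination -hpyth / 4

lemma SquareAP.exists_sq_eq {t x : ℚ} (h : SquareAP t x) :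
    ∃ y, y ≠ 0 ∧ y ^ 2 = x ^ 3 - t ^ 2 * x := by
  obtain ⟨u, v, w, hu, hv, hw, hxu, hxv, hxw⟩ := h
  refine ⟨u * v * w, by positivity, ?_⟩
  rw [show x ^ 3 - t ^ 2 * x = x * (x - t) * (x + t) by ring, hxv, hxw, hxu]
  ring

/-- `Eₜ` has no point of order `4`, as `√2` is irrational. -/
lemma squareAP_doubleX {t x y : ℚ} (ht : t ≠ 0) (hy : y ≠ 0) (h : y ^ 2 = x ^ 3 - t ^ 2 * x) :
    SquareAP t (doubleX t x) := by
  have hv : x ^ 2 - 2 * t * x - t ^ 2 ≠ 0 := fun h0 =>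
    Rat.sq_ne_two ((x - t) / t) (by field_simp; linear_combination h0)
  have hw : x ^ 2 + 2 * t * x - t ^ 2 ≠ 0 := fun h0 =>
    Rat.sq_ne_two ((x + t) / t) (by field_simp; linear_combination h0)
  refine ⟨(x ^ 2 + t ^ 2) / (2 * y), (x ^ 2 - 2 * t * x - t ^ 2) / (2 * y),
    (x ^ 2 + 2 * t * x - t ^ 2) / (2 * y), by positivity, by positivity, by positivity,
    ?_, ?_, ?_⟩ <;> rw [doubleX, ← h] <;> field_simp
  · ring
  · linear_combination (-16 * t) * h
  · linear_combination (16 * t) * h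

lemma isCoprime_of_sq_eq_sq_sub {t a b e : ℤ} (ht : Squarefree t) (hae : IsCoprime a e)
    (hb : b ^ 2 = a ^ 2 - t * e ^ 2) : IsCoprime a t := by
  refine isCoprime_of_prime_dvd (fun h => ht.ne_zero h.2) fun p hp hpa hpt => ?_
  have hpb : p ∣ b := hp.dvd_of_dvd_pow (n := 2)
    (hb ▸ dvd_sub (dvd_pow hpa two_ne_zero) (hpt.mul_right _))
  have hpe : IsCoprime p e :=
    hp.coprime_iff_not_dvd.mpr fun hpe => hp.not_isUnit (hae.isUnit_of_dvd' hpa hpe)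
  have hpte : p * p ∣ t * e ^ 2 := by
    rw [show t * e ^ 2 = a * a - b * b by linear_combination hb]
    exact dvd_sub (mul_dvd_mul hpa hpa) (mul_dvd_mul hpb hpb)
  exact hp.not_isUnit (ht p ((hpe.mul_left hpe).pow_right.dvd_of_dvd_mul_right hpte))

lemma odd_mul_of_sq_eq {a b c m : ℤ} (hb : b ^ 2 = a ^ 2 - m) (hc : c ^ 2 = a ^ 2 + m)
    (ham : IsCoprime a m) : Odd (b * c) := by
  have hsum : b ^ 2 + c ^ 2 = 2 * a ^ 2 := by linear_combination hb + hc
  have hbc : Even b ↔ Even c := by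
    have : Even (b ^ 2 + c ^ 2) := hsum ▸ even_two_mul _
    rwa [Int.even_add, Int.even_pow' two_ne_zero, Int.even_pow' two_ne_zero] at this
  by_contra hodd
  rw [Int.not_odd_iff_even, Int.even_mul] at hodd
  obtain ⟨⟨b, rfl⟩, ⟨c, rfl⟩⟩ : Even b ∧ Even c := by tauto
  have ha : 2 ∣ a := by
    rw [← even_iff_two_dvd, ← Int.even_pow' two_ne_zero]
    exact ⟨b ^ 2 + c ^ 2, by linarith⟩
  have hm : 2 ∣ m := ⟨c ^ 2 - b ^ 2, by linarith⟩
  exact Int.prime_two.not_isUnit (ham.isUnit_of_dvd' ha hm)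

lemma isCoprime_pow_four_add_sq {a b c m : ℤ} (hb : b ^ 2 = a ^ 2 - m)
    (hc : c ^ 2 = a ^ 2 + m) (ham : IsCoprime a m) :
    IsCoprime (a ^ 4 + m ^ 2) (2 * a * b * c) := by
  have hodd := odd_mul_of_sq_eq hb hc ham
  have hmbc : IsCoprime m (b * c) := by
    refine .mul_right ((IsCoprime.pow_right_iff two_pos).mp ?_)
      ((IsCoprime.pow_right_iff two_pos).mp ?_)
    · rw [hb, show a ^ 2 - m = a ^ 2 + m * (-1) by ring, IsCoprime.add_mul_left_right_iff]
      exact ham.symm.pow_right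
    · rw [hc, show a ^ 2 + m = a ^ 2 + m * 1 by ring, IsCoprime.add_mul_left_right_iff]
      exact ham.symm.pow_right
  have hK : a ^ 4 + m ^ 2 = (b * c) ^ 2 + 2 * m ^ 2 := by
    linear_combination (-c ^ 2) * hb - (a ^ 2 - m) * hc
  rw [show 2 * a * b * c = a * (2 * (b * c)) by ring]
  refine .mul_right ?_ (.mul_right ?_ ?_)
  · rw [show a ^ 4 + m ^ 2 = m ^ 2 + a * a ^ 3 by ring, IsCoprime.add_mul_left_left_iff]
    exact ham.symm.pow_left
  · rw [hK, IsCoprime.add_mul_left_left_iff]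
    exact Int.isCoprime_two_right.mpr hodd.pow
  · rw [hK, add_comm, sq (b * c), IsCoprime.add_mul_left_left_iff]
    exact (Int.isCoprime_two_left.mpr hodd).mul_left hmbc.pow_left

lemma Rat.den_eq_of_sq_add_intCast {u v : ℚ} {n : ℤ} (h : u ^ 2 + n = v ^ 2) :
    v.den = u.den := by
  have := congrArg Rat.den h
  rw [Rat.add_intCast_den, Rat.den_pow, Rat.den_pow] at this
  exact (Nat.pow_left_injective two_ne_zero this).symm

lemma SquareAP.exists_int {t : ℤ} {x : ℚ} (h : SquareAP t x) :
    ∃ a b c e : ℤ, 0 < e ∧ a ≠ 0 ∧ b ≠ 0 ∧ c ≠ 0 ∧ IsCoprime a e ∧ x = (a / e) ^ 2 ∧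
      b ^ 2 = a ^ 2 - t * e ^ 2 ∧ c ^ 2 = a ^ 2 + t * e ^ 2 := by
  obtain ⟨u, v, w, hu, hv, hw, rfl, hv2, hw2⟩ := h
  have hvu : v.den = u.den := Rat.den_eq_of_sq_add_intCast (n := -t) (by push_cast; linarith)
  have hwu : w.den = u.den := Rat.den_eq_of_sq_add_intCast hw2
  refine ⟨u.num, v.num, w.num, u.den, by positivity, Rat.num_ne_zero.mpr hu,
    Rat.num_ne_zero.mpr hv, Rat.num_ne_zero.mpr hw,
    Int.isCoprime_iff_gcd_eq_one.mpr u.reduced, by rw [Int.cast_natCast, Rat.num_div_den], ?_, ?_⟩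
  · have : (v.num : ℚ) ^ 2 = u.num ^ 2 - t * u.den ^ 2 := by
      rw [← Rat.mul_den_eq_num v, ← Rat.mul_den_eq_num u, hvu]
      linear_combination (-(u.den : ℚ) ^ 2) * hv2
    exact_mod_cast this
  · have : (w.num : ℚ) ^ 2 = u.num ^ 2 + t * u.den ^ 2 := by
      rw [← Rat.mul_den_eq_num w, ← Rat.mul_den_eq_num u, hwu]
      linear_combination (-(u.den : ℚ) ^ 2) * hw2
    exact_mod_cast this

lemma doubleX_div_sq {t a b c e : ℚ} (ha : a ≠ 0) (hb0 : b ≠ 0) (hc0 : c ≠ 0) (he : e ≠ 0)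
    (hb : b ^ 2 = a ^ 2 - t * e ^ 2) (hc : c ^ 2 = a ^ 2 + t * e ^ 2) :
    doubleX t ((a / e) ^ 2) = (a ^ 4 + (t * e ^ 2) ^ 2) ^ 2 / (2 * a * b * c * e) ^ 2 := by
  rw [doubleX, show ((a / e) ^ 2) ^ 3 - t ^ 2 * (a / e) ^ 2 = (a * b * c) ^ 2 / e ^ 6 by
    field_simp; linear_combination (-c ^ 2) * hb - (a ^ 2 - t * e ^ 2) * hc]
  field_simp
  ring

lemma Rat.den_intCast_div_of_isCoprime {p q : ℤ} (hq : 0 < q) (hpq : IsCoprime p q) :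
    (((p : ℚ) / q).den : ℤ) = q :=
  Rat.den_div_eq_of_coprime hq (Int.isCoprime_iff_gcd_eq_one.mp hpq)

theorem SquareAP.den_lt_den_doubleX {t : ℤ} (ht : Squarefree t) {x : ℚ} (h : SquareAP t x) :
    x.den < (doubleX t x).den := by
  obtain ⟨a, b, c, e, he, ha, hb0, hc0, hae, rfl, hb, hc⟩ := h.exists_int
  have hK : IsCoprime (a ^ 4 + (t * e ^ 2) ^ 2) (2 * a * b * c * e) := by
    refine .mul_right (isCoprime_pow_four_add_sq hb hc ?_) ?_
    · exact (isCoprime_of_sq_eq_sq_sub ht hae hb).mul_right hae.pow_right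
    · rw [show a ^ 4 + (t * e ^ 2) ^ 2 = a ^ 4 + e * (t ^ 2 * e ^ 3) by ring,
        IsCoprime.add_mul_left_left_iff]
      exact hae.pow_left
  have hden_x : (((a / e : ℚ) ^ 2).den : ℤ) = e ^ 2 := by
    rw [Rat.den_pow, Nat.cast_pow, Rat.den_intCast_div_of_isCoprime he hae]
  have hden_dbl : ((doubleX t ((a / e : ℚ) ^ 2)).den : ℤ) = (2 * a * b * c * e) ^ 2 := by
    rw [doubleX_div_sq (b := b) (c := c) (mod_cast ha) (mod_cast hb0) (mod_cast hc0)
      (by positivity) (mod_cast hb) (mod_cast hc)]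
    exact_mod_cast Rat.den_intCast_div_of_isCoprime (by positivity) (hK.pow (m := 2) (n := 2))
  zify
  rw [hden_x, hden_dbl]
  have : 0 < (a * b * c) ^ 2 := by positivity
  nlinarith

theorem SquareAP.infinite_setOf {t : ℤ} (ht : Squarefree t) {x : ℚ} (h : SquareAP t x) :
    {x | SquareAP t x}.Infinite := by
  intro hfin
  obtain ⟨y, hy, hmax⟩ := hfin.exists_maximalFor Rat.den _ ⟨x, h⟩
  obtain ⟨z, hz, hyz⟩ := hy.exists_sq_eq
  have hlt := hy.den_lt_den_doubleX ht
  exact hlt.not_ge (hmax (squareAP_doubleX (by exact_mod_cast ht.ne_zero) hz hyz) hlt.le)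

theorem isCongruent_iff_infinite_general (t : ℕ) (hsf : Squarefree t) :
    IsCongruent t ↔ Infinite (Et t).Point := by
  have ht : (0 : ℚ) < t := by exact_mod_cast Nat.pos_of_ne_zero hsf.ne_zero
  rw [infinite_point_iff ht.ne']
  constructor
  · intro h
    obtain ⟨x, hx⟩ := h.exists_squareAP
    have hS := SquareAP.infinite_setOf (t := t) (Int.squarefree_natCast.mpr hsf)
      (by rwa [Int.cast_natCast])
    simp only [Int.cast_natCast] at hS
    refine (hS.mono fun x hx => ?_).of_image Prod.fst
    obtain ⟨y, -, hxy⟩ := hx.exists_sq_eq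
    exact ⟨(x, y), hxy, rfl⟩
  · intro h
    obtain ⟨x, y, hy, hxy⟩ := exists_sq_eq_of_infinite h
    exact isCongruent_of_sq_eq ht hy hxy

/-- A squarefree positive integer `t` is a congruent number if and only if the group of
rational points of `Eₜ : Y² = X³ − t²X` is infinite. -/
theorem isCongruent_iff_infinite (t : ℕ) (hsf : Squarefree t) (ht : 0 < t) :
    IsCongruent t ↔ Infinite (Et t).Point :=
  isCongruent_iff_infinite_general t hsf
end

section
/- Let t be a nonzero rational number and let P = (X, Y) be a rational point on E_t : Y² = X³ − t²X with Y ≠ 0. Let T(X, Y) = ((X² − t²)/Y, 2tX/Y, (X² + t²)/Y) = (a, b, c). Then under the group law: T(−P) = (−a, −b, −c), T(P + (0, 0)) = (−a, −b, c), T(P + (t, 0)) = (−b, −a, −c), and T(P + (−t, 0)) = (b, a, −c). -/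
/-- For `t ≠ 0`, the points `(0, 0)`, `(t, 0)` and `(−t, 0)` are nonsingular points of `Eₜ`. -/
lemma Et_nonsingular (t x : ℚ) (ht : t ≠ 0) (hx : x = 0 ∨ x = t ∨ x = -t) :
    (Et t).Nonsingular x 0 := by
  rw [WeierstrassCurve.Affine.nonsingular_iff]
  have ht2 : t ^ 2 ≠ 0 := pow_ne_zero 2 ht
  constructor
  · rw [WeierstrassCurve.Affine.equation_iff]
    simp only [Et]
    rcases hx with h | h | h <;> rw [h] <;> ring
  · left
    simp only [Et]
    rcases hx with h | h | h <;> rw [h] <;> intro hc <;> apply ht2 <;> nlinarith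

/-- A point `(x, y)` of `Eₜ` satisfying the Weierstrass equation with `y ≠ 0` is nonsingular. -/
lemma Et_nonsingular_of_ne (t x y : ℚ) (hy : y ≠ 0) (h : y ^ 2 = x ^ 3 - t ^ 2 * x) :
    (Et t).Nonsingular x y := by
  rw [WeierstrassCurve.Affine.nonsingular_iff']
  constructor
  · rw [WeierstrassCurve.Affine.equation_iff]
    simp only [Et]
    linarith
  · right
    simp only [Et]
    intro hc
    exact hy (by linarith)

/-- The triangle associated to a point `(X, Y)` of `Eₜ` with `Y ≠ 0`. -/
def triangleOf (t X Y : ℚ) : ℚ × ℚ × ℚ :=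
  ((X ^ 2 - t ^ 2) / Y, 2 * t * X / Y, (X ^ 2 + t ^ 2) / Y)

open WeierstrassCurve.Affine

lemma WeierstrassCurve.Affine.Point.exists_some_eq_some_of_eq {R : Type*} [CommRing R]
    {W : WeierstrassCurve.Affine R} {x y x' y' : R} (h : W.Nonsingular x y) (hx : x = x')
    (hy : y = y') : ∃ h' : W.Nonsingular x' y', Point.some _ _ h = Point.some _ _ h' := by
  subst hx hy
  exact ⟨h, rfl⟩

section

variable {t X Y : ℚ}

lemma Et_equation_iff {x y : ℚ} : (Et t).Equation x y ↔ y ^ 2 = x ^ 3 - t ^ 2 * x := by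
  rw [equation_iff]
  simp only [Et]
  constructor <;> intro h <;> linarith

lemma Et_negY (x y : ℚ) : (Et t).negY x y = -y := by
  simp [negY, Et]

lemma Et_X_ne_of_Y_ne_zero {e : ℚ} (hP : (Et t).Equation X Y) (hT : (Et t).Equation e 0)
    (hY : Y ≠ 0) : X ≠ e := by
  rintro rfl
  rw [Et_equation_iff] at hP hT
  exact hY (pow_eq_zero_iff two_ne_zero |>.mp (hP.trans (by linarith)))

lemma Et_add_two_torsion {e X' Y' : ℚ} {hP : (Et t).Nonsingular X Y}
    {hT : (Et t).Nonsingular e 0} (hX : X ≠ e)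
    (hX' : X' = e + (3 * e ^ 2 - t ^ 2) / (X - e))
    (hY' : Y' = -((3 * e ^ 2 - t ^ 2) * Y / (X - e) ^ 2)) :
    ∃ h' : (Et t).Nonsingular X' Y', Point.some _ _ hP + Point.some _ _ hT = Point.some _ _ h' := by
  have hXe : X - e ≠ 0 := sub_ne_zero.mpr hX
  have hP' := Et_equation_iff.mp hP.1
  have hT' := Et_equation_iff.mp hT.1
  have hslope : (Et t).slope X e Y 0 = Y / (X - e) := by
    rw [slope_of_X_ne hX, sub_zero]
  have haddX : (Et t).addX X e ((Et t).slope X e Y 0) = X' := by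
    rw [hslope, hX']
    simp only [addX, Et]
    field_simp
    linear_combination hP' - hT'
  have haddY : (Et t).addY X e Y ((Et t).slope X e Y 0) = Y' := by
    rw [addY, Et_negY, negAddY, haddX, hslope, hX', hY']
    field_simp
    ring
  rw [Point.add_of_X_ne hX]
  exact Point.exists_some_eq_some_of_eq _ haddX haddY

lemma Et_add_origin {hP : (Et t).Nonsingular X Y} {h₀ : (Et t).Nonsingular 0 0} (hX : X ≠ 0) :
    ∃ h' : (Et t).Nonsingular (-t ^ 2 / X) (t ^ 2 * Y / X ^ 2),
      Point.some _ _ hP + Point.some _ _ h₀ = Point.some _ _ h' :=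
  Et_add_two_torsion hX (by field_simp; ring) (by field_simp; ring)

lemma Et_add_t {hP : (Et t).Nonsingular X Y} {hT : (Et t).Nonsingular t 0} (hX : X ≠ t) :
    ∃ h' : (Et t).Nonsingular (t * (X + t) / (X - t)) (-(2 * t ^ 2 * Y / (X - t) ^ 2)),
      Point.some _ _ hP + Point.some _ _ hT = Point.some _ _ h' := by
  have hXt : X - t ≠ 0 := sub_ne_zero.mpr hX
  exact Et_add_two_torsion hX (by field_simp; ring) (by field_simp; ring)

lemma Et_add_neg_t {hP : (Et t).Nonsingular X Y} {hT : (Et t).Nonsingular (-t) 0}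
    (hX : X ≠ -t) :
    ∃ h' : (Et t).Nonsingular (-(t * (X - t)) / (X + t)) (-(2 * t ^ 2 * Y / (X + t) ^ 2)),
      Point.some _ _ hP + Point.some _ _ hT = Point.some _ _ h' := by
  have hXt : X + t ≠ 0 := by rwa [← sub_neg_eq_add, sub_ne_zero]
  exact Et_add_two_torsion hX (by field_simp; ring) (by field_simp; ring)

lemma triangleOf_neg_Y :
    triangleOf t X (-Y) = (-((X ^ 2 - t ^ 2) / Y), -(2 * t * X / Y), -((X ^ 2 + t ^ 2) / Y)) := by
  simp only [triangleOf, div_neg]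

lemma triangleOf_add_origin (ht : t ≠ 0) (hX : X ≠ 0) (hY : Y ≠ 0) :
    triangleOf t (-t ^ 2 / X) (t ^ 2 * Y / X ^ 2) =
      (-((X ^ 2 - t ^ 2) / Y), -(2 * t * X / Y), (X ^ 2 + t ^ 2) / Y) := by
  simp only [triangleOf, Prod.mk.injEq]
  refine ⟨?_, ?_, ?_⟩ <;> field_simp <;> ring

lemma triangleOf_add_t (ht : t ≠ 0) (hX : X ≠ t) (hY : Y ≠ 0) :
    triangleOf t (t * (X + t) / (X - t)) (-(2 * t ^ 2 * Y / (X - t) ^ 2)) =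
      (-(2 * t * X / Y), -((X ^ 2 - t ^ 2) / Y), -((X ^ 2 + t ^ 2) / Y)) := by
  have hXt : X - t ≠ 0 := sub_ne_zero.mpr hX
  simp only [triangleOf, Prod.mk.injEq]
  refine ⟨?_, ?_, ?_⟩ <;> field_simp <;> ring

lemma triangleOf_add_neg_t (ht : t ≠ 0) (hX : X ≠ -t) (hY : Y ≠ 0) :
    triangleOf t (-(t * (X - t)) / (X + t)) (-(2 * t ^ 2 * Y / (X + t) ^ 2)) =
      (2 * t * X / Y, (X ^ 2 - t ^ 2) / Y, -((X ^ 2 + t ^ 2) / Y)) := by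
  have hXt : X + t ≠ 0 := by rwa [← sub_neg_eq_add, sub_ne_zero]
  simp only [triangleOf, Prod.mk.injEq]
  refine ⟨?_, ?_, ?_⟩ <;> field_simp <;> ring

end
/-- Translating a point `P = (X, Y)` of `Eₜ` (with `Y ≠ 0`) by the torsion points transforms
the associated triangle `T(P) = (a, b, c)` as follows: `T(−P) = (−a, −b, −c)`,
`T(P + (0, 0)) = (−a, −b, c)`, `T(P + (t, 0)) = (−b, −a, −c)` and
`T(P + (−t, 0)) = (b, a, −c)`. -/
theorem Et_torsion_action_on_triangles (t X Y : ℚ) (ht : t ≠ 0) (hY : Y ≠ 0)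
    (heq : Y ^ 2 = X ^ 3 - t ^ 2 * X) :
    let P : (Et t).Point := .some _ _ (Et_nonsingular_of_ne t X Y hY heq)
    let T₁ : (Et t).Point := .some _ _ (Et_nonsingular t 0 ht (Or.inl rfl))
    let T₂ : (Et t).Point := .some _ _ (Et_nonsingular t t ht (Or.inr (Or.inl rfl)))
    let T₃ : (Et t).Point := .some _ _ (Et_nonsingular t (-t) ht (Or.inr (Or.inr rfl)))
    let a : ℚ := (X ^ 2 - t ^ 2) / Y
    let b : ℚ := 2 * t * X / Y
    let c : ℚ := (X ^ 2 + t ^ 2) / Y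
    (∃ (X' Y' : ℚ) (h' : (Et t).Nonsingular X' Y'),
      -P = .some _ _ h' ∧ Y' ≠ 0 ∧ triangleOf t X' Y' = (-a, -b, -c)) ∧
    (∃ (X' Y' : ℚ) (h' : (Et t).Nonsingular X' Y'),
      P + T₁ = .some _ _ h' ∧ Y' ≠ 0 ∧ triangleOf t X' Y' = (-a, -b, c)) ∧
    (∃ (X' Y' : ℚ) (h' : (Et t).Nonsingular X' Y'),
      P + T₂ = .some _ _ h' ∧ Y' ≠ 0 ∧ triangleOf t X' Y' = (-b, -a, -c)) ∧
    (∃ (X' Y' : ℚ) (h' : (Et t).Nonsingular X' Y'),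
      P + T₃ = .some _ _ h' ∧ Y' ≠ 0 ∧ triangleOf t X' Y' = (b, a, -c)) := by
  intro P T₁ T₂ T₃ a b c
  have hP := Et_nonsingular_of_ne t X Y hY heq
  have hT₁ := Et_nonsingular t 0 ht (Or.inl rfl)
  have hT₂ := Et_nonsingular t t ht (Or.inr (Or.inl rfl))
  have hT₃ := Et_nonsingular t (-t) ht (Or.inr (Or.inr rfl))
  have hX₁ : X ≠ 0 := Et_X_ne_of_Y_ne_zero hP.1 hT₁.1 hY
  have hX₂ : X ≠ t := Et_X_ne_of_Y_ne_zero hP.1 hT₂.1 hY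
  have hX₃ : X ≠ -t := Et_X_ne_of_Y_ne_zero hP.1 hT₃.1 hY
  obtain ⟨h₀, hneg⟩ : ∃ h' : (Et t).Nonsingular X (-Y), -P = Point.some _ _ h' := by
    rw [Point.neg_some]
    exact Point.exists_some_eq_some_of_eq _ rfl (Et_negY X Y)
  obtain ⟨h₁, hadd₁⟩ := Et_add_origin (hP := hP) (h₀ := hT₁) hX₁
  obtain ⟨h₂, hadd₂⟩ := Et_add_t (hP := hP) (hT := hT₂) hX₂
  obtain ⟨h₃, hadd₃⟩ := Et_add_neg_t (hP := hP) (hT := hT₃) hX₃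
  have hd₂ : (X - t) ^ 2 ≠ 0 := pow_ne_zero 2 (sub_ne_zero.mpr hX₂)
  have hd₃ : (X + t) ^ 2 ≠ 0 := pow_ne_zero 2 (by rwa [← sub_neg_eq_add, sub_ne_zero])
  exact ⟨⟨_, _, h₀, hneg, neg_ne_zero.mpr hY, triangleOf_neg_Y⟩,
    ⟨_, _, h₁, hadd₁, by positivity, triangleOf_add_origin ht hX₁ hY⟩,
    ⟨_, _, h₂, hadd₂, by simp [ht, hY, hd₂], triangleOf_add_t ht hX₂ hY⟩,
    ⟨_, _, h₃, hadd₃, by simp [ht, hY, hd₃], triangleOf_add_neg_t ht hX₃ hY⟩⟩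
end

section
/- Let t be a squarefree positive integer and let ℋ(t) be the set of positive integers c such that c is the hypotenuse of some primitive Pythagorean triple (a, b, c) for which the squarefree part of ab/2 equals t (that is, (ab/2)·t is a perfect square). Then the sum over c ∈ ℋ(t) of 1/c converges. -/
/-- `hypotenuseSet t` is the set `ℋ(t)` of hypotenuses of primitive Pythagorean triples
`(a, b, c)` whose area `a·b/2` has squarefree part equal to `t`, i.e. `(a·b/2)·t` is a
perfect square. -/
def hypotenuseSet (t : ℕ) : Set ℕ :=
  {c | ∃ a b : ℕ, 0 < a ∧ 0 < b ∧ a ^ 2 + b ^ 2 = c ^ 2 ∧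
    Nat.gcd (Nat.gcd a b) c = 1 ∧ ∃ k : ℕ, ((a : ℚ) * b / 2) * t = (k : ℚ) ^ 2}

/-!
Parametrise the primitive triple as `c = m² + n²`, `ab = 2mn(m² - n²)`. Then `M = |m|` is coprime
to the other factors of the area `M N |m² - n²|`, and since `(area)·t` is a square, `M = d α²`
with `d = gcd(M, t)` a divisor of `t`; likewise `N = e β²`. So every `c ∈ ℋ(t)` has the form
`(d α²)² + (e β²)² ≥ α² β²` with `d, e ∣ t`, and `∑ 1/c ≤ τ(t)² (∑ 1/α²)² < ∞`.
-/

theorem Nat.coprime_of_sq_add_sq_eq_sq {a b c : ℕ} (h : a ^ 2 + b ^ 2 = c ^ 2)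
    (hgcd : Nat.gcd (Nat.gcd a b) c = 1) : a.Coprime b := by
  have hc : Nat.gcd a b ∣ c := by
    rw [← Nat.pow_dvd_pow_iff two_ne_zero, ← h]
    exact dvd_add (pow_dvd_pow_of_dvd (Nat.gcd_dvd_left a b) 2)
      (pow_dvd_pow_of_dvd (Nat.gcd_dvd_right a b) 2)
  exact Nat.dvd_one.mp (hgcd ▸ Nat.dvd_gcd dvd_rfl hc)

theorem Nat.exists_eq_gcd_mul_sq_of_mul_mul_eq_sq {u v t k : ℕ} (huv : u.Coprime v)
    (h : u * v * t = k ^ 2) : ∃ α, u = u.gcd t * α ^ 2 := by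
  obtain ⟨u', t', hut, hu, ht⟩ := Nat.exists_coprime u t
  generalize u.gcd t = d at hu ht ⊢
  subst hu ht
  obtain rfl | hd := d.eq_zero_or_pos
  · exact ⟨0, by simp⟩
  have hsq : d ^ 2 * (u' * (v * t')) = k ^ 2 := by rw [← h]; ring
  obtain ⟨k', rfl⟩ : d ∣ k := (Nat.pow_dvd_pow_iff two_ne_zero).mp ⟨_, hsq.symm⟩
  have h' : u' * (v * t') = k' ^ 2 :=
    Nat.eq_of_mul_eq_mul_left (pow_pos hd 2) (by rw [hsq]; ring)
  have hcop : u'.Coprime (v * t') :=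
    (Nat.Coprime.coprime_dvd_left (dvd_mul_right u' d) huv).mul_right hut
  obtain ⟨α, rfl⟩ := exists_eq_pow_of_mul_eq_pow (Nat.isUnit_iff.mpr hcop) h'
  exact ⟨α, by ring⟩

theorem Nat.Coprime.exists_euclid_params {a b c : ℕ} (hab : a.Coprime b)
    (h : a ^ 2 + b ^ 2 = c ^ 2) : ∃ m n : ℤ, IsCoprime m n ∧ (c : ℤ) = m ^ 2 + n ^ 2 ∧
      (a : ℤ) * b = 2 * (m * n * (m ^ 2 - n ^ 2)) := by
  have hPT : PythagoreanTriple (a : ℤ) b c := by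
    have h' : (a : ℤ) ^ 2 + b ^ 2 = c ^ 2 := by exact_mod_cast h
    unfold PythagoreanTriple
    linear_combination h'
  obtain ⟨m, n, hab', hc, hmn, -⟩ :=
    PythagoreanTriple.coprime_classification.mp ⟨hPT, hab⟩
  refine ⟨m, n, Int.isCoprime_iff_gcd_eq_one.mpr hmn, ?_, ?_⟩
  · rcases hc with hc | hc
    · exact hc
    · nlinarith [sq_nonneg m, sq_nonneg n, Int.natCast_nonneg c]
  · rcases hab' with ⟨ha, hb⟩ | ⟨ha, hb⟩ <;> rw [ha, hb] <;> ring

theorem IsCoprime.mul_sq_sub_sq_right {R : Type*} [CommRing R] {m n : R} (h : IsCoprime m n) :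
    IsCoprime m (n * (m ^ 2 - n ^ 2)) := by
  refine h.mul_right ?_
  simpa [sq, sub_eq_neg_add] using (h.pow_right (n := 2)).neg_right.add_mul_left_right m

theorem exists_coprime_params_of_mem_hypotenuseSet {t c : ℕ} (hc : c ∈ hypotenuseSet t) :
    ∃ M N W k : ℕ, 0 < M ∧ 0 < N ∧ M.Coprime (N * W) ∧ N.Coprime (M * W) ∧
      c = M ^ 2 + N ^ 2 ∧ M * N * W * t = k ^ 2 := by
  obtain ⟨a, b, ha, hb, hpyth, hgcd, k, hk⟩ := hc
  obtain ⟨m, n, hmn, hcmn, habmn⟩ :=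
    (Nat.coprime_of_sq_add_sq_eq_sq hpyth hgcd).exists_euclid_params hpyth
  have habt : a * b * t = 2 * k ^ 2 := by
    have : (a : ℚ) * b * t = 2 * k ^ 2 := by linear_combination 2 * hk
    exact_mod_cast this
  have hab : a * b = 2 * (m.natAbs * n.natAbs * (m ^ 2 - n ^ 2).natAbs) := by
    simpa [Int.natAbs_mul] using congrArg Int.natAbs habmn
  have hpos : 0 < m.natAbs * n.natAbs * (m ^ 2 - n ^ 2).natAbs := by
    have := Nat.mul_pos ha hb
    omega
  have hcopN : n.natAbs.Coprime (m.natAbs * (m ^ 2 - n ^ 2).natAbs) := by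
    rw [← Int.natAbs_neg (m ^ 2 - n ^ 2), neg_sub, ← Int.natAbs_mul]
    exact Int.isCoprime_iff_gcd_eq_one.mp hmn.symm.mul_sq_sub_sq_right
  refine ⟨m.natAbs, n.natAbs, (m ^ 2 - n ^ 2).natAbs, k, ?_, ?_, ?_, hcopN, ?_, ?_⟩
  · exact Nat.pos_of_ne_zero fun h => by simp [h] at hpos
  · exact Nat.pos_of_ne_zero fun h => by simp [h] at hpos
  · rw [← Int.natAbs_mul]
    exact Int.isCoprime_iff_gcd_eq_one.mp hmn.mul_sq_sub_sq_right
  · zify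
    simpa only [sq_abs] using hcmn
  · apply Nat.eq_of_mul_eq_mul_left two_pos
    rw [← habt, hab]
    ring

theorem exists_eq_sq_add_sq_of_mem_hypotenuseSet {t c : ℕ} (hc : c ∈ hypotenuseSet t) :
    ∃ d e α β : ℕ, d ∣ t ∧ e ∣ t ∧ 0 < α ∧ 0 < β ∧ c = (d * α ^ 2) ^ 2 + (e * β ^ 2) ^ 2 := by
  obtain ⟨M, N, W, k, hM, hN, hMc, hNc, rfl, hk⟩ := exists_coprime_params_of_mem_hypotenuseSet hc
  obtain ⟨α, hα⟩ := Nat.exists_eq_gcd_mul_sq_of_mul_mul_eq_sq (t := t) hMc (by rw [← hk]; ring)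
  obtain ⟨β, hβ⟩ := Nat.exists_eq_gcd_mul_sq_of_mul_mul_eq_sq (t := t) hNc (by rw [← hk]; ring)
  refine ⟨M.gcd t, N.gcd t, α, β, M.gcd_dvd_right t, N.gcd_dvd_right t, ?_, ?_, by rw [← hα, ← hβ]⟩
  · exact Nat.pos_of_ne_zero fun h => by simp [h] at hα; omega
  · exact Nat.pos_of_ne_zero fun h => by simp [h] at hβ; omega

theorem Summable.subtype_of_subset_range {ι β α : Type*} [AddCommGroup α] [UniformSpace α]
    [IsUniformAddGroup α] [CompleteSpace α] {f : ι → β} {g : β → α} {S : Set β}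
    (h : Summable (g ∘ f)) (hS : S ⊆ Set.range f) : Summable fun c : S => g c := by
  choose s hs using fun c : S => hS c.2
  have hinj : s.Injective := fun c c' h => Subtype.ext (by rw [← hs c, ← hs c', h])
  simpa [Function.comp_def, hs] using h.comp_injective hinj

theorem summable_one_div_mul_add_one_sq {F : Type*} [Finite F] {w : F → ℕ} (hw : ∀ i, 0 < w i) :
    Summable fun x : F × ℕ => (1 : ℝ) / (w x.1 * (x.2 + 1) ^ 2 : ℕ) := by
  have hsq : Summable fun n : ℕ => 1 / ((n + 1 : ℕ) : ℝ) ^ 2 :=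
    (summable_nat_add_iff 1).mpr (Real.summable_one_div_nat_pow.mpr one_lt_two)
  refine ((Summable.of_finite (f := fun _ : F => (1 : ℝ))).mul_of_nonneg hsq
    (fun _ => zero_le_one) fun _ => by positivity).of_nonneg_of_le (fun _ => by positivity) ?_
  rintro ⟨i, n⟩
  have hi : (1 : ℝ) ≤ w i := by exact_mod_cast hw i
  simp only [one_mul, Nat.cast_mul, Nat.cast_pow]
  exact one_div_le_one_div_of_le (by positivity) (le_mul_of_one_le_left (by positivity) hi)

theorem Summable.one_div_sq_add_sq {κ : Type*} {φ : κ → ℝ} (hpos : ∀ x, 0 < φ x)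
    (hφ : Summable fun x => 1 / φ x) :
    Summable fun p : κ × κ => 1 / (φ p.1 ^ 2 + φ p.2 ^ 2) := by
  refine (hφ.mul_of_nonneg hφ (fun x => (one_div_pos.mpr (hpos x)).le)
    fun x => (one_div_pos.mpr (hpos x)).le).of_nonneg_of_le
    (fun p => one_div_nonneg.mpr (by positivity)) fun ⟨x, y⟩ => ?_
  have hx := hpos x
  have hy := hpos y
  rw [one_div_mul_one_div]
  exact one_div_le_one_div_of_le (by positivity) (by nlinarith [sq_nonneg (φ x - φ y)])

theorem summable_inv_hypotenuseSet_general (t : ℕ) (ht : 0 < t) :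
    Summable fun c : hypotenuseSet t => (1 : ℝ) / (c : ℕ) := by
  set φ : t.divisors × ℕ → ℕ := fun x => x.1 * (x.2 + 1) ^ 2
  have hφ : Summable fun x => (1 : ℝ) / φ x :=
    summable_one_div_mul_add_one_sq fun d => Nat.pos_of_mem_divisors d.2
  have hφpos : ∀ x, (0 : ℝ) < φ x := fun x => by
    exact_mod_cast Nat.mul_pos (Nat.pos_of_mem_divisors x.1.2) (by positivity)
  refine Summable.subtype_of_subset_range (g := fun c : ℕ => (1 : ℝ) / c)
    (f := fun p : (t.divisors × ℕ) × (t.divisors × ℕ) => φ p.1 ^ 2 + φ p.2 ^ 2) ?_ ?_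
  · simpa [Function.comp_def] using hφ.one_div_sq_add_sq hφpos
  · intro c hc
    obtain ⟨d, e, α, β, hd, he, hα, hβ, rfl⟩ := exists_eq_sq_add_sq_of_mem_hypotenuseSet hc
    refine ⟨((⟨d, Nat.mem_divisors.mpr ⟨hd, ht.ne'⟩⟩, α - 1),
      (⟨e, Nat.mem_divisors.mpr ⟨he, ht.ne'⟩⟩, β - 1)), ?_⟩
    simp [φ, Nat.sub_add_cancel hα, Nat.sub_add_cancel hβ]

/-- For a squarefree positive integer `t`, the sum of the reciprocals of the hypotenuses
in `ℋ(t)` converges. -/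
theorem summable_inv_hypotenuseSet (t : ℕ) (hsf : Squarefree t) (ht : 0 < t) :
    Summable fun c : hypotenuseSet t => (1 : ℝ) / (c : ℕ) :=
  summable_inv_hypotenuseSet_general t ht
end
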